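/- Let n be a positive integer, H := {1, −1, 1+√2, 1−√2, −1+√2, −1−√2}, and SDB_n := cone(⋃_{α ∈ H} B̄(α)). Then S^n_+ ⊆ (SDD_n)* ⊆ (SDB_n)* ⊆ (DD_n)*, where the dual cones are taken within S^n with respect to the trace inner product ⟨A,B⟩ = Trace(AᵀB). -/
import Mathlib


open Matrix Finset

noncomputable section

/-- `e i` is the standard basis vector with a `1` in coordinate `i`. -/
def e {n : ℕ} (i : Fin n) : Fin n → ℝ := Pi.single i 1

/-- The positive semidefinite cone `S^n_+`. -/
def PSDcone (n : ℕ) : Set (Matrix (Fin n) (Fin n) ℝ) :=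
  {X | X.IsSymm ∧ ∀ d : Fin n → ℝ, 0 ≤ d ⬝ᵥ X.mulVec d}

/-- The set of diagonally dominant symmetric matrices `DD_n`. -/
def DD (n : ℕ) : Set (Matrix (Fin n) (Fin n) ℝ) :=
  {A | A.IsSymm ∧ ∀ i, ∑ j ∈ Finset.univ.erase i, |A i j| ≤ A i i}

/-- The set of scaled diagonally dominant symmetric matrices `SDD_n`. -/
def SDD (n : ℕ) : Set (Matrix (Fin n) (Fin n) ℝ) :=
  {A | A.IsSymm ∧ ∃ D : Fin n → ℝ, (∀ i, 0 < D i) ∧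
    Matrix.diagonal D * A * Matrix.diagonal D ∈ DD n}

/-- The conical hull of a set of matrices. -/
def coneHull {n : ℕ} (K : Set (Matrix (Fin n) (Fin n) ℝ)) :
    Set (Matrix (Fin n) (Fin n) ℝ) :=
  {X | ∃ (k : ℕ) (c : Fin k → ℝ) (M : Fin k → Matrix (Fin n) (Fin n) ℝ),
    (∀ i, 0 ≤ c i) ∧ (∀ i, M i ∈ K) ∧ X = ∑ i, c i • M i}

/-- The dual cone within `S^n` w.r.t. the trace inner product. -/
def dualCone {n : ℕ} (K : Set (Matrix (Fin n) (Fin n) ℝ)) :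
    Set (Matrix (Fin n) (Fin n) ℝ) :=
  {A | A.IsSymm ∧ ∀ B ∈ K, 0 ≤ Matrix.trace (Aᵀ * B)}

/-- The SD basis of Type I, as a set. -/
def Bplus (n : ℕ) : Set (Matrix (Fin n) (Fin n) ℝ) :=
  {M | ∃ i j : Fin n, i ≤ j ∧ M = vecMulVec (e i + e j) (e i + e j)}

/-- The SD basis of Type II, as a set. -/
def Bminus (n : ℕ) : Set (Matrix (Fin n) (Fin n) ℝ) :=
  {M | ∃ i : Fin n, M = vecMulVec (e i + e i) (e i + e i)} ∪
    {M | ∃ i j : Fin n, i < j ∧ M = vecMulVec (e i - e j) (e i - e j)}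

/-- The expanded SD basis matrix `B̄_{i,j}(α) = (e_i + α e_j)(e_i + α e_j)ᵀ`. -/
def Bbar {n : ℕ} (α : ℝ) (i j : Fin n) : Matrix (Fin n) (Fin n) ℝ :=
  vecMulVec (e i + α • e j) (e i + α • e j)

/-- The expanded SD basis `B̄(α)`, as a set. -/
def BbarSet (n : ℕ) (α : ℝ) : Set (Matrix (Fin n) (Fin n) ℝ) :=
  {M | ∃ i j : Fin n, i ≤ j ∧ M = Bbar α i j}

/-- The space `S^n` of symmetric matrices as a submodule. -/
def symmSubmodule (n : ℕ) : Submodule ℝ (Matrix (Fin n) (Fin n) ℝ) where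
  carrier := {A | A.IsSymm}
  add_mem' := fun {A B} hA hB => by
    simp only [Set.mem_setOf_eq, Matrix.IsSymm, Matrix.transpose_add] at *
    rw [hA, hB]
  zero_mem' := by simp [Matrix.IsSymm]
  smul_mem' := fun c A hA => by
    simp only [Set.mem_setOf_eq, Matrix.IsSymm, Matrix.transpose_smul] at *
    rw [hA]

/-- Index set for pairs `1 ≤ i ≤ j ≤ n`. -/
abbrev SymIdx (n : ℕ) := {p : Fin n × Fin n // p.1 ≤ p.2}

/-! ### Auxiliary lemmas -/

lemma e_apply {n : ℕ} (i a : Fin n) : e i a = if i = a then 1 else 0 := by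
  simp [e, Pi.single_apply, eq_comm]

lemma vmv_symm {n : ℕ} (u : Fin n → ℝ) : (vecMulVec u u).IsSymm := by
  ext a b; simp [vecMulVec_apply, Matrix.transpose_apply, mul_comm]

lemma diag_vmv {n : ℕ} (d u : Fin n → ℝ) :
    diagonal d * vecMulVec u u * diagonal d
      = vecMulVec (fun l => d l * u l) (fun l => d l * u l) := by
  ext a b
  rw [Matrix.mul_diagonal, Matrix.diagonal_mul]
  simp [vecMulVec_apply]; ring

lemma trace_vmv {n : ℕ} (A : Matrix (Fin n) (Fin n) ℝ) (u : Fin n → ℝ) :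
    Matrix.trace (Aᵀ * vecMulVec u u) = u ⬝ᵥ A.mulVec u := by
  simp [Matrix.trace, Matrix.diag, Matrix.mul_apply, vecMulVec_apply, dotProduct,
    Matrix.mulVec, Finset.mul_sum]
  rw [Finset.sum_comm]
  exact Finset.sum_congr rfl fun a _ => Finset.sum_congr rfl fun b _ => by ring

lemma trace_mul_sum {n k : ℕ} (A : Matrix (Fin n) (Fin n) ℝ) (c : Fin k → ℝ)
    (M : Fin k → Matrix (Fin n) (Fin n) ℝ) :
    Matrix.trace (Aᵀ * ∑ i, c i • M i) = ∑ i, c i * Matrix.trace (Aᵀ * M i) := by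
  rw [Matrix.mul_sum, Matrix.trace_sum]
  exact Finset.sum_congr rfl fun i _ => by rw [Matrix.mul_smul, Matrix.trace_smul, smul_eq_mul]

/-- A rank-one matrix `w wᵀ` whose vector is supported on `{i, j}` with `|w i| = |w j|`
is diagonally dominant. -/
lemma supp2_DD {n : ℕ} (w : Fin n → ℝ) (i j : Fin n)
    (hsupp : ∀ l, l ≠ i → l ≠ j → w l = 0) (habs : |w i| = |w j|) :
    vecMulVec w w ∈ DD n := by
  refine ⟨vmv_symm w, fun r => ?_⟩
  simp only [vecMulVec_apply]
  have key : ∑ s ∈ Finset.univ.erase r, |w r * w s|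
      = |w r| * ∑ s ∈ Finset.univ.erase r, |w s| := by
    rw [Finset.mul_sum]; exact Finset.sum_congr rfl fun s _ => abs_mul _ _
  rw [key]
  by_cases hr : w r = 0
  · simp [hr]
  have hri : r = i ∨ r = j := by
    by_contra h; push_neg at h; exact hr (hsupp r h.1 h.2)
  have hsub : ∑ s ∈ Finset.univ.erase r, |w s|
      = ∑ s ∈ ({i, j} : Finset (Fin n)).erase r, |w s| := by
    refine (Finset.sum_subset ?_ ?_).symm
    · intro x hx
      exact Finset.mem_erase.mpr ⟨(Finset.mem_erase.mp hx).1, Finset.mem_univ x⟩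
    · intro x hx hx'
      have hxr : x ≠ r := (Finset.mem_erase.mp hx).1
      have : x ∉ ({i, j} : Finset (Fin n)) := fun hm => hx' (Finset.mem_erase.mpr ⟨hxr, hm⟩)
      simp only [Finset.mem_insert, Finset.mem_singleton] at this
      push_neg at this
      simp [hsupp x this.1 this.2]
  have hle : ∑ s ∈ Finset.univ.erase r, |w s| ≤ |w r| := by
    rw [hsub]
    by_cases hij : i = j
    · rcases hri with rfl | rfl
      · subst hij; simp
      · rw [← hij] at *; simp
    · rcases hri with rfl | rfl
      · rw [show ({r, j} : Finset (Fin n)) = insert r {j} from rfl,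
          Finset.erase_insert (by simp [Ne.symm, hij])]
        simp [habs.ge.trans_eq rfl, ← habs]
      · have : ({i, r} : Finset (Fin n)).erase r = {i} := by
          ext x
          simp only [Finset.mem_erase, Finset.mem_insert, Finset.mem_singleton]
          constructor
          · rintro ⟨hx, h | h⟩ <;> [exact h; exact absurd h hx]
          · rintro rfl; exact ⟨hij, Or.inl rfl⟩
        rw [this]; simp [habs]
  calc |w r| * ∑ s ∈ Finset.univ.erase r, |w s| ≤ |w r| * |w r| :=
      mul_le_mul_of_nonneg_left hle (abs_nonneg _)
  _ = w r * w r := abs_mul_abs_self _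

/-- Each `B̄_{i,j}(α)` with `α ≠ 0` is scaled diagonally dominant. -/
lemma Bbar_mem_SDD {n : ℕ} (α : ℝ) (hα : α ≠ 0) (i j : Fin n) : Bbar α i j ∈ SDD n := by
  refine ⟨vmv_symm _, fun l => if l = i then |α| else 1, fun l => ?_, ?_⟩
  · dsimp only; split
    · exact abs_pos.mpr hα
    · exact one_pos
  · rw [Bbar, diag_vmv]
    set u : Fin n → ℝ := e i + α • e j with hu
    set w : Fin n → ℝ := fun l => (if l = i then |α| else 1) * u l with hw
    refine supp2_DD w i j (fun l h1 h2 => ?_) ?_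
    · simp [hw, hu, e_apply, Ne.symm h1, Ne.symm h2]
    · by_cases hij : i = j
      · rw [hij]
      · simp [hw, hu, e_apply, hij, Ne.symm hij, abs_abs]

def sg (x : ℝ) : ℝ := if 0 ≤ x then 1 else -1

lemma abs_mul_sg (x : ℝ) : |x| * sg x = x := by
  rcases le_or_gt 0 x with h | h
  · rw [sg, if_pos h, abs_of_nonneg h, mul_one]
  · rw [sg, if_neg (not_le.mpr h), abs_of_neg h]; ring

lemma sg_mul_self (x : ℝ) : sg x * sg x = 1 := by
  rcases le_or_gt 0 x with h | h
  · rw [sg, if_pos h]; norm_num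
  · rw [sg, if_neg (not_le.mpr h)]; norm_num

def ccf {n : ℕ} (A : Matrix (Fin n) (Fin n) ℝ) (p : Fin n × Fin n) : ℝ :=
  if p.1 = p.2 then (A p.1 p.1 - ∑ l ∈ Finset.univ.erase p.1, |A p.1 l|) / 4
  else if p.1 < p.2 then |A p.1 p.2| else 0

def uuf {n : ℕ} (A : Matrix (Fin n) (Fin n) ℝ) (p : Fin n × Fin n) : Fin n → ℝ :=
  if p.1 = p.2 then e p.1 + (1 : ℝ) • e p.1
  else if p.1 < p.2 then e p.1 + sg (A p.1 p.2) • e p.2 else e p.1 + (1 : ℝ) • e p.1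

lemma uuf_diag {n : ℕ} (A : Matrix (Fin n) (Fin n) ℝ) (i : Fin n) :
    uuf A (i, i) = e i + (1 : ℝ) • e i := by simp [uuf]

lemma uuf_lt {n : ℕ} (A : Matrix (Fin n) (Fin n) ℝ) {i j : Fin n} (h : i < j) :
    uuf A (i, j) = e i + sg (A i j) • e j := by simp [uuf, ne_of_lt h, h]

lemma ccf_diag {n : ℕ} (A : Matrix (Fin n) (Fin n) ℝ) (i : Fin n) :
    ccf A (i, i) = (A i i - ∑ l ∈ Finset.univ.erase i, |A i l|) / 4 := by simp [ccf]

lemma ccf_lt {n : ℕ} (A : Matrix (Fin n) (Fin n) ℝ) {i j : Fin n} (h : i < j) :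
    ccf A (i, j) = |A i j| := by simp [ccf, ne_of_lt h, h]

lemma ccf_gt {n : ℕ} (A : Matrix (Fin n) (Fin n) ℝ) {i j : Fin n} (h : j < i) :
    ccf A (i, j) = 0 := by
  simp [ccf, (ne_of_lt h).symm, asymm h]

lemma decomp_sum {n : ℕ} (A : Matrix (Fin n) (Fin n) ℝ) (hA : A ∈ DD n) :
    ∑ p : Fin n × Fin n, ccf A p • vecMulVec (uuf A p) (uuf A p) = A := by
  ext a b
  rw [Matrix.sum_apply]
  simp only [Matrix.smul_apply, vecMulVec_apply, smul_eq_mul]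
  rw [Fintype.sum_prod_type]
  have hsymm := hA.1
  have hAs : ∀ x y : Fin n, A x y = A y x := fun x y => hsymm.apply y x
  rcases lt_trichotomy a b with hab | hab | hab
  · -- a < b : only term (a,b)
    have hne : a ≠ b := ne_of_lt hab
    rw [Finset.sum_eq_single a]
    · rw [Finset.sum_eq_single b]
      · rw [ccf_lt A hab, uuf_lt A hab]
        simp [e_apply, hne, Ne.symm hne]
        linear_combination abs_mul_sg (A a b)
      · intro j _ hj
        rcases lt_trichotomy a j with h | h | h
        · rw [ccf_lt A h, uuf_lt A h]
          simp [e_apply, hne, Ne.symm hne, hj, ne_of_lt h, Ne.symm (ne_of_lt h)]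
        · subst h
          rw [ccf_diag, uuf_diag]
          simp [e_apply, hne]
        · rw [ccf_gt A h]; ring
      · exact fun h => absurd (Finset.mem_univ b) h
    · intro i _ hi
      apply Finset.sum_eq_zero
      intro j _
      rcases lt_trichotomy i j with h | h | h
      · rw [ccf_lt A h, uuf_lt A h]
        by_cases hja : j = a
        · subst hja
          have hib : i ≠ b := ne_of_lt (h.trans hab)
          simp [e_apply, hi, hib, hne]
        · simp [e_apply, hi, hja]
      · subst h
        rw [ccf_diag, uuf_diag]
        simp [e_apply, hi]
      · rw [ccf_gt A h]; ring
    · exact fun h => absurd (Finset.mem_univ a) h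
  · -- a = b : diagonal
    subst hab
    rw [← Finset.add_sum_erase Finset.univ _ (Finset.mem_univ a)]
    have hFa : ∑ j : Fin n, ccf A (a, j) * (uuf A (a, j) a * uuf A (a, j) a)
        = (A a a - ∑ l ∈ Finset.univ.erase a, |A a l|)
          + ∑ j ∈ Finset.univ.erase a, (if a < j then |A a j| else 0) := by
      rw [← Finset.add_sum_erase Finset.univ _ (Finset.mem_univ a)]
      congr 1
      · rw [ccf_diag, uuf_diag]
        simp [e_apply]
        ring
      · refine Finset.sum_congr rfl fun j hj => ?_
        have hja : j ≠ a := (Finset.mem_erase.mp hj).1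
        rcases lt_trichotomy a j with h | h | h
        · rw [ccf_lt A h, uuf_lt A h, if_pos h]
          simp [e_apply, hja]
        · exact absurd h.symm hja
        · rw [ccf_gt A h, if_neg (asymm h)]; ring
    have hFi : ∑ i ∈ Finset.univ.erase a,
        (∑ j : Fin n, ccf A (i, j) * (uuf A (i, j) a * uuf A (i, j) a))
        = ∑ i ∈ Finset.univ.erase a, (if i < a then |A i a| else 0) := by
      refine Finset.sum_congr rfl fun i hi' => ?_
      have hi : i ≠ a := (Finset.mem_erase.mp hi').1
      rw [Finset.sum_eq_single a]
      · rcases lt_trichotomy i a with h | h | h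
        · rw [ccf_lt A h, uuf_lt A h, if_pos h]
          simp [e_apply, hi]
          linear_combination |A i a| * sg_mul_self (A i a)
        · exact absurd h hi
        · rw [ccf_gt A h, if_neg (asymm h)]; ring
      · intro j _ hj
        rcases lt_trichotomy i j with h | h | h
        · rw [ccf_lt A h, uuf_lt A h]
          simp [e_apply, hi, hj]
        · subst h
          rw [ccf_diag, uuf_diag]
          simp [e_apply, hi]
        · rw [ccf_gt A h]; ring
      · exact fun h => absurd (Finset.mem_univ a) h
    rw [hFa, hFi]
    have hcomb : ∑ j ∈ Finset.univ.erase a, (if a < j then |A a j| else 0)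
        + ∑ i ∈ Finset.univ.erase a, (if i < a then |A i a| else 0)
        = ∑ l ∈ Finset.univ.erase a, |A a l| := by
      rw [← Finset.sum_add_distrib]
      refine Finset.sum_congr rfl fun l hl => ?_
      have hla : l ≠ a := (Finset.mem_erase.mp hl).1
      rcases lt_trichotomy a l with h | h | h
      · rw [if_pos h, if_neg (asymm h), add_zero]
      · exact absurd h.symm hla
      · rw [if_neg (asymm h), if_pos h, zero_add, hAs l a]
    linarith [hcomb]
  · -- b < a : only term (b,a)
    have hne : b ≠ a := ne_of_lt hab
    rw [Finset.sum_eq_single b]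
    · rw [Finset.sum_eq_single a]
      · rw [ccf_lt A hab, uuf_lt A hab]
        simp [e_apply, hne, Ne.symm hne]
        rw [hAs a b]
        linear_combination abs_mul_sg (A b a)
      · intro j _ hj
        rcases lt_trichotomy b j with h | h | h
        · rw [ccf_lt A h, uuf_lt A h]
          simp [e_apply, hne, Ne.symm hne, hj, ne_of_lt h, Ne.symm (ne_of_lt h)]
        · subst h
          rw [ccf_diag, uuf_diag]
          simp [e_apply, hne, Ne.symm hne]
        · rw [ccf_gt A h]; ring
      · exact fun h => absurd (Finset.mem_univ a) h
    · intro i _ hi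
      apply Finset.sum_eq_zero
      intro j _
      rcases lt_trichotomy i j with h | h | h
      · rw [ccf_lt A h, uuf_lt A h]
        by_cases hja : j = a
        · subst hja
          simp [e_apply, hi, Ne.symm hne]
        · by_cases hia : i = a
          · subst hia
            have hjb : j ≠ b := fun hh => asymm hab (hh ▸ h)
            simp [e_apply, hjb, Ne.symm hne]
          · simp [e_apply, hia, hja]
      · subst h
        rw [ccf_diag, uuf_diag]
        by_cases hia : i = a
        · subst hia
          simp [e_apply, Ne.symm hne]
        · simp [e_apply, hia]
      · rw [ccf_gt A h]; ring
    · exact fun h => absurd (Finset.mem_univ b) h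

/-- Decomposition of a DD matrix into a conic combination of rank-one basis matrices. -/
lemma DD_decomp {n : ℕ} (A : Matrix (Fin n) (Fin n) ℝ) (hA : A ∈ DD n) :
    ∃ (k : ℕ) (c : Fin k → ℝ) (u : Fin k → (Fin n → ℝ)),
      (∀ p, 0 ≤ c p) ∧
      (∀ p, vecMulVec (u p) (u p) ∈ BbarSet n 1 ∪ BbarSet n (-1)) ∧
      A = ∑ p, c p • vecMulVec (u p) (u p) := by
  classical
  obtain ⟨eqv⟩ : Nonempty (Fin (Fintype.card (Fin n × Fin n)) ≃ (Fin n × Fin n)) :=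
    ⟨(Fintype.equivFin _).symm⟩
  have hnn : ∀ p : Fin n × Fin n, 0 ≤ ccf A p := by
    rintro ⟨i, j⟩
    rcases lt_trichotomy i j with h | h | h
    · rw [ccf_lt A h]; exact abs_nonneg _
    · subst h; rw [ccf_diag]
      have := hA.2 i
      linarith
    · rw [ccf_gt A h]
  have hmem : ∀ p : Fin n × Fin n,
      vecMulVec (uuf A p) (uuf A p) ∈ BbarSet n 1 ∪ BbarSet n (-1) := by
    rintro ⟨i, j⟩
    rcases lt_trichotomy i j with h | h | h
    · rcases le_or_gt 0 (A i j) with h0 | h0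
      · left
        exact ⟨i, j, le_of_lt h, by
          rw [uuf_lt A h, show sg (A i j) = 1 from by rw [sg, if_pos h0]]; rfl⟩
      · right
        exact ⟨i, j, le_of_lt h, by
          rw [uuf_lt A h, show sg (A i j) = -1 from by rw [sg, if_neg (not_le.mpr h0)]]; rfl⟩
    · subst h
      exact Or.inl ⟨i, i, le_refl i, by rw [uuf_diag]; rfl⟩
    · left
      refine ⟨i, i, le_refl i, ?_⟩
      rw [show uuf A (i, j) = e i + (1 : ℝ) • e i from by
        simp [uuf, (ne_of_lt h).symm, asymm h]]
      rfl
  exact ⟨_, fun q => ccf A (eqv q), fun q => uuf A (eqv q), fun q => hnn (eqv q),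
    fun q => hmem (eqv q),
    (decomp_sum A hA).symm.trans
      (Equiv.sum_comp eqv fun p => ccf A p • vecMulVec (uuf A p) (uuf A p)).symm⟩

/-- with `H = {±1, ±1 ± √2}` and `SDB_n = cone(⋃_{α ∈ H} B̄(α))`,
one has `S^n_+ ⊆ (SDD_n)* ⊆ (SDB_n)* ⊆ (DD_n)*`. -/
theorem stmt18 (n : ℕ) (hn : 0 < n) :
    PSDcone n ⊆ dualCone (SDD n) ∧
    dualCone (SDD n) ⊆
      dualCone (coneHull (⋃ α ∈ ({1, -1, 1 + Real.sqrt 2, 1 - Real.sqrt 2,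
        -1 + Real.sqrt 2, -1 - Real.sqrt 2} : Set ℝ), BbarSet n α)) ∧
    dualCone (coneHull (⋃ α ∈ ({1, -1, 1 + Real.sqrt 2, 1 - Real.sqrt 2,
        -1 + Real.sqrt 2, -1 - Real.sqrt 2} : Set ℝ), BbarSet n α)) ⊆
      dualCone (DD n) := by
  have hsqrt2 : Real.sqrt 2 ≠ 1 := by
    intro h
    have : (2 : ℝ) = 1 := by
      have := Real.sq_sqrt (by norm_num : (0:ℝ) ≤ 2)
      rw [h] at this; linarith
    norm_num at this
  have hsqrt2nn : 0 ≤ Real.sqrt 2 := Real.sqrt_nonneg 2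
  have hne : ∀ α ∈ ({1, -1, 1 + Real.sqrt 2, 1 - Real.sqrt 2,
      -1 + Real.sqrt 2, -1 - Real.sqrt 2} : Set ℝ), α ≠ 0 := by
    intro α hα
    simp only [Set.mem_insert_iff, Set.mem_singleton_iff] at hα
    rcases hα with rfl | rfl | rfl | rfl | rfl | rfl
    · norm_num
    · norm_num
    · positivity
    · intro h; apply hsqrt2; linarith
    · intro h; apply hsqrt2; linarith
    · intro h
      have h2 : Real.sqrt 2 = -1 := by linarith
      linarith
  refine ⟨?_, ?_, ?_⟩
  · -- PSD ⊆ dual(SDD)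
    rintro A ⟨hAsymm, hApsd⟩
    refine ⟨hAsymm, fun B hB => ?_⟩
    obtain ⟨hBsymm, D, hD, hDD⟩ := hB
    obtain ⟨k, c, u, hc, _, hsum⟩ := DD_decomp _ hDD
    set Dinv : Fin n → ℝ := fun l => (D l)⁻¹ with hDinvdef
    have hDinvD : diagonal Dinv * diagonal D = (1 : Matrix (Fin n) (Fin n) ℝ) := by
      rw [diagonal_mul_diagonal]
      rw [show (fun i => Dinv i * D i) = fun _ => (1:ℝ) from
        funext fun i => inv_mul_cancel₀ (hD i).ne']
      exact Matrix.diagonal_one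
    have hDDinv : diagonal D * diagonal Dinv = (1 : Matrix (Fin n) (Fin n) ℝ) := by
      rw [diagonal_mul_diagonal]
      rw [show (fun i => D i * Dinv i) = fun _ => (1:ℝ) from
        funext fun i => mul_inv_cancel₀ (hD i).ne']
      exact Matrix.diagonal_one
    have hBeq : B = ∑ p, c p •
        vecMulVec (fun l => Dinv l * u p l) (fun l => Dinv l * u p l) := by
      have h1 : diagonal Dinv * (diagonal D * B * diagonal D) * diagonal Dinv = B := by
        have : diagonal Dinv * (diagonal D * B * diagonal D) * diagonal Dinv
            = (diagonal Dinv * diagonal D) * B * (diagonal D * diagonal Dinv) := by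
          simp only [Matrix.mul_assoc]
        rw [this, hDinvD, hDDinv, Matrix.one_mul, Matrix.mul_one]
      rw [← h1, hsum, Matrix.mul_sum, Matrix.sum_mul]
      refine Finset.sum_congr rfl fun p _ => ?_
      rw [Matrix.mul_smul, Matrix.smul_mul, diag_vmv]
    rw [hBeq, trace_mul_sum]
    refine Finset.sum_nonneg fun p _ => mul_nonneg (hc p) ?_
    rw [trace_vmv]
    exact hApsd _
  · -- dual(SDD) ⊆ dual(SDB)
    rintro A ⟨hAsymm, hAd⟩
    refine ⟨hAsymm, fun B hB => ?_⟩
    obtain ⟨k, c, M, hc, hM, rfl⟩ := hB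
    rw [trace_mul_sum]
    refine Finset.sum_nonneg fun i _ => mul_nonneg (hc i) ?_
    have := hM i
    simp only [Set.mem_iUnion] at this
    obtain ⟨α, hα, i', j', _, hMe⟩ := this
    rw [hMe]
    exact hAd _ (Bbar_mem_SDD α (hne α hα) i' j')
  · -- dual(SDB) ⊆ dual(DD)
    rintro A ⟨hAsymm, hAd⟩
    refine ⟨hAsymm, fun B hB => ?_⟩
    obtain ⟨k, c, u, hc, hmem, hsum⟩ := DD_decomp _ hB
    refine hAd B ⟨k, c, fun p => vecMulVec (u p) (u p), hc, fun p => ?_, hsum⟩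
    have h1 : BbarSet n 1 ⊆ ⋃ α ∈ ({1, -1, 1 + Real.sqrt 2, 1 - Real.sqrt 2,
        -1 + Real.sqrt 2, -1 - Real.sqrt 2} : Set ℝ), BbarSet n α :=
      Set.subset_biUnion_of_mem (by simp)
    have h2 : BbarSet n (-1) ⊆ ⋃ α ∈ ({1, -1, 1 + Real.sqrt 2, 1 - Real.sqrt 2,
        -1 + Real.sqrt 2, -1 - Real.sqrt 2} : Set ℝ), BbarSet n α :=
      Set.subset_biUnion_of_mem (by simp)
    rcases hmem p with h | h
    · exact h1 h
    · exact h2 h
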